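/- Let η : Fin 4 → ℝ satisfy η i ≥ 0 for all i and Σ_i η i = 1, and write ε = 1 − η 0, assuming ε < 1/2. Let d = H.mulVec η. Then d i ≠ 0 for every i, and (1/4)·Σ_{i} |(H.mulVec (fun j => (d j)⁻¹)) i| ≤ 1/(1 − 2ε). -/

import Mathlib

/-!
Write `t = 1 - 2ε = 2η₀ - 1`. The Pauli-transfer diagonal is `d = (1, t + 2η₁, t + 2η₂, t + 2η₃)`,
so every `dᵢ` lies in `[t, 1]` and `d₁ + d₂ + d₃ = 2t + 1`. For `v = d⁻¹` we have `1 ≤ vᵢ ≤ t⁻¹`,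
and at most one of the coordinates `1 ± v₁ ± v₂ ± v₃` other than the first is positive (any two of
them add up to `2 - 2vₖ ≤ 0`). Hence `‖μ‖₁` is at most the larger of `(v₁ + v₂ + v₃ - 1)/2` and
`max vₖ`. The first is bounded by comparing `x⁻¹` with its chord over `[t, 1]`, the second is at most
`t⁻¹`.
-/

open Matrix Finset

/-- The 4×4 real Hadamard matrix whose columns are the Pauli-transfer-matrix
diagonals of the single-qubit Pauli operators I, X, Y, Z. -/
def Hmat : Matrix (Fin 4) (Fin 4) ℝ :=
  !![1, 1, 1, 1;
     1, 1, -1, -1;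
     1, -1, 1, -1;
     1, -1, -1, 1]

theorem Hmat_mulVec (v : Fin 4 → ℝ) :
    Hmat *ᵥ v = ![v 0 + v 1 + v 2 + v 3, v 0 + v 1 - v 2 - v 3,
      v 0 - v 1 + v 2 - v 3, v 0 - v 1 - v 2 + v 3] := by
  ext i
  fin_cases i <;>
    simp only [Hmat, mulVec, dotProduct, Fin.sum_univ_four, of_apply, Fin.zero_eta, Fin.mk_one,
      Fin.reduceFinMk, Fin.isValue, cons_val', cons_val_fin_one, cons_val_zero, cons_val_one,
      Matrix.cons_val] <;>
    ring

section ProbabilityVector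

variable {η : Fin 4 → ℝ}

theorem Hmat_mulVec_zero_of_sum_eq_one (hsum : ∑ i, η i = 1) : (Hmat *ᵥ η) 0 = 1 := by
  simpa [Hmat_mulVec, Fin.sum_univ_four] using hsum

theorem Hmat_mulVec_mem_Icc (hη : ∀ i, 0 ≤ η i) (hsum : ∑ i, η i = 1) (i : Fin 4) :
    (Hmat *ᵥ η) i ∈ Set.Icc (2 * η 0 - 1) 1 := by
  rw [Fin.sum_univ_four] at hsum
  fin_cases i <;>
    simp only [Hmat_mulVec, Set.mem_Icc, Fin.zero_eta, Fin.mk_one, Fin.reduceFinMk, Fin.isValue,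
      cons_val_zero, cons_val_one, Matrix.cons_val] <;>
    constructor <;> linarith [hη 0, hη 1, hη 2, hη 3]

theorem Hmat_mulVec_one_add_two_add_three (hsum : ∑ i, η i = 1) :
    (Hmat *ᵥ η) 1 + (Hmat *ᵥ η) 2 + (Hmat *ᵥ η) 3 = 2 * (2 * η 0 - 1) + 1 := by
  rw [Fin.sum_univ_four] at hsum
  simp only [Hmat_mulVec, Fin.isValue, cons_val_zero, cons_val_one, Matrix.cons_val]
  linarith

end ProbabilityVector

theorem inv_le_inv_add_inv_sub_div_mul {a b x : ℝ} (ha : 0 < a) (hx : x ∈ Set.Icc a b) :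
    x⁻¹ ≤ a⁻¹ + b⁻¹ - x / (a * b) := by
  obtain ⟨hax, hxb⟩ := hx
  have hx0 : 0 < x := ha.trans_le hax
  have hb : 0 < b := hx0.trans_le hxb
  have key : a⁻¹ + b⁻¹ - x / (a * b) - x⁻¹ = (x - a) * (b - x) / (a * b * x) := by
    field_simp
    ring
  have : 0 ≤ (x - a) * (b - x) / (a * b * x) :=
    div_nonneg (mul_nonneg (sub_nonneg.2 hax) (sub_nonneg.2 hxb)) (by positivity)
  linarith

theorem inv_add_inv_add_inv_le {t x y z : ℝ} (ht : 0 < t) (hx : x ∈ Set.Icc t 1)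
    (hy : y ∈ Set.Icc t 1) (hz : z ∈ Set.Icc t 1) (hsum : x + y + z = 2 * t + 1) :
    x⁻¹ + y⁻¹ + z⁻¹ ≤ 2 * t⁻¹ + 1 := by
  have chord := fun w (hw : w ∈ Set.Icc t 1) => inv_le_inv_add_inv_sub_div_mul ht hw
  have hsum' : x / t + y / t + z / t = 2 + t⁻¹ := by
    rw [← add_div, ← add_div, hsum]
    field_simp
  simp only [inv_one, mul_one] at chord
  linarith [chord x hx, chord y hy, chord z hz]

theorem sum_abs_Hmat_mulVec_le {v : Fin 4 → ℝ} {M : ℝ} (h0 : v 0 = 1) (hv : ∀ i, 1 ≤ v i)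
    (hM : ∀ i, v i ≤ M) (hsum : v 1 + v 2 + v 3 ≤ 2 * M + 1) :
    ∑ i, |(Hmat *ᵥ v) i| ≤ 4 * M := by
  simp only [Hmat_mulVec, Fin.sum_univ_four, h0, Fin.isValue, cons_val_zero, cons_val_one,
    Matrix.cons_val]
  rcases abs_cases (1 + v 1 + v 2 + v 3) with ⟨e0, _⟩ | ⟨e0, _⟩ <;>
  rcases abs_cases (1 + v 1 - v 2 - v 3) with ⟨e1, _⟩ | ⟨e1, _⟩ <;>
  rcases abs_cases (1 - v 1 + v 2 - v 3) with ⟨e2, _⟩ | ⟨e2, _⟩ <;>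
  rcases abs_cases (1 - v 1 - v 2 + v 3) with ⟨e3, _⟩ | ⟨e3, _⟩ <;>
  linarith [hv 1, hv 2, hv 3, hM 1, hM 2, hM 3]

/-- Single-qubit case of the quasi-probability 1-norm bound ‖μ‖₁ ≤ 1/(1−2ε)
for a Pauli channel with probability vector η and gate error probability
ε = 1 − η 0 < 1/2. -/
theorem qpr_one_norm_upper_bound
    (η : Fin 4 → ℝ) (hη : ∀ i, 0 ≤ η i) (hsum : ∑ i, η i = 1)
    (ε : ℝ) (hε : ε = 1 - η 0) (hεlt : ε < 1 / 2)
    (d : Fin 4 → ℝ) (hd : d = Hmat.mulVec η) :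
    (∀ i, d i ≠ 0) ∧
    (1 / 4) * ∑ i, |(Hmat.mulVec (fun j => (d j)⁻¹)) i| ≤ 1 / (1 - 2 * ε) := by
  subst hd
  have ht_eq : 1 - 2 * ε = 2 * η 0 - 1 := by rw [hε]; ring
  set t := 2 * η 0 - 1
  have ht : 0 < t := by linarith
  have hIcc := Hmat_mulVec_mem_Icc hη hsum
  have hpos i : 0 < (Hmat *ᵥ η) i := ht.trans_le (hIcc i).1
  refine ⟨fun i => (hpos i).ne', ?_⟩
  have hbound : ∑ i, |(Hmat *ᵥ fun j => ((Hmat *ᵥ η) j)⁻¹) i| ≤ 4 * t⁻¹ := by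
    exact sum_abs_Hmat_mulVec_le (by simp [Hmat_mulVec_zero_of_sum_eq_one hsum])
      (fun i => one_le_inv₀ (hpos i) |>.2 (hIcc i).2)
      (fun i => inv_anti₀ ht (hIcc i).1)
      (inv_add_inv_add_inv_le ht (hIcc 1) (hIcc 2) (hIcc 3)
        (Hmat_mulVec_one_add_two_add_three hsum))
  rw [ht_eq, one_div t]
  linarith
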